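/- arXiv:2605.22156 — 3 statements merged into one kernel-verified Lean document; each statement's English description precedes it below -/
import Mathlib

section
/- The potential function ψ attains its unique maximum at 0: ψ(0) = 0, and ψ(δ) < 0 for every real δ ≠ 0. Consequently the directional regularization term −|A|·ψ(δ) is a nonnegative penalty that vanishes exactly when the policy matches the reference (δ = 0). -/
/-- The one-way weight function `w(δ) = max(ε_low, min(ε_high, exp(-δ)))`. -/
noncomputable def owpoWeight (εlow εhigh : ℝ) (δ : ℝ) : ℝ :=
  max εlow (min εhigh (Real.exp (-δ)))

/-- The potential function `ψ(δ) = ∫_0^δ (w(u) − 1) du`. -/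
noncomputable def owpoPotential (εlow εhigh : ℝ) (δ : ℝ) : ℝ :=
  ∫ u in (0 : ℝ)..δ, (owpoWeight εlow εhigh u - 1)

lemma owpoWeight_continuous (εlow εhigh : ℝ) :
    Continuous (fun u => owpoWeight εlow εhigh u) := by
  unfold owpoWeight; fun_prop

lemma owpo_psi_neg (εlow εhigh : ℝ)
    (hlow : 0 < εlow) (hlow1 : εlow < 1) (hhigh : 1 < εhigh) :
    ∀ δ : ℝ, δ ≠ 0 → owpoPotential εlow εhigh δ < 0 := by
  intro δ hδ
  have hcont := owpoWeight_continuous εlow εhigh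
  rcases lt_or_gt_of_ne hδ with h | h
  · -- δ < 0 : w u - 1 > 0 on (δ, 0)
    have hpos : 0 < ∫ u in δ..(0:ℝ), (owpoWeight εlow εhigh u - 1) := by
      apply intervalIntegral.intervalIntegral_pos_of_pos_on
      · exact ((hcont.sub continuous_const).intervalIntegrable δ 0)
      · intro x hx
        have hx0 : x < 0 := hx.2
        have : (1:ℝ) < Real.exp (-x) := by
          rw [Real.one_lt_exp_iff]; linarith
        have : (1:ℝ) < min εhigh (Real.exp (-x)) := lt_min hhigh this
        have : (1:ℝ) < owpoWeight εlow εhigh x :=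
          lt_of_lt_of_le this (le_max_right _ _)
        linarith
      · exact h
    unfold owpoPotential
    rw [intervalIntegral.integral_symm]; linarith
  · -- δ > 0 : 1 - w u > 0 on (0, δ)
    have hpos : 0 < ∫ u in (0:ℝ)..δ, (1 - owpoWeight εlow εhigh u) := by
      apply intervalIntegral.intervalIntegral_pos_of_pos_on
      · exact ((continuous_const.sub hcont).intervalIntegrable 0 δ)
      · intro x hx
        have hx0 : 0 < x := hx.1
        have he : Real.exp (-x) < 1 := by
          rw [Real.exp_lt_one_iff]; linarith
        have : owpoWeight εlow εhigh x < 1 :=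
          max_lt hlow1 (lt_of_le_of_lt (min_le_right _ _) he)
        linarith
      · exact h
    have hneg : (∫ u in (0:ℝ)..δ, (owpoWeight εlow εhigh u - 1)) =
        -∫ u in (0:ℝ)..δ, (1 - owpoWeight εlow εhigh u) := by
      rw [← intervalIntegral.integral_neg]
      congr 1; ext u; ring
    unfold owpoPotential
    rw [hneg]; linarith

/-- `ψ` attains its unique maximum at 0: `ψ(0) = 0` and `ψ(δ) < 0` for every `δ ≠ 0`.
Consequently the directional regularization term `−|A|·ψ(δ)` is a nonnegative penalty that,
for `A ≠ 0`, vanishes exactly when `δ = 0`. -/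
theorem owpoPotential_unique_max (εlow εhigh : ℝ)
    (hlow : 0 < εlow) (hlow1 : εlow < 1) (hhigh : 1 < εhigh) :
    owpoPotential εlow εhigh 0 = 0 ∧
    (∀ δ : ℝ, δ ≠ 0 → owpoPotential εlow εhigh δ < 0) ∧
    (∀ A δ : ℝ, 0 ≤ -(|A| * owpoPotential εlow εhigh δ)) ∧
    (∀ A δ : ℝ, A ≠ 0 → (-(|A| * owpoPotential εlow εhigh δ) = 0 ↔ δ = 0)) := by
  have h0 : owpoPotential εlow εhigh 0 = 0 := by
    unfold owpoPotential; simp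
  have hneg := owpo_psi_neg εlow εhigh hlow hlow1 hhigh
  have hnonpos : ∀ δ : ℝ, owpoPotential εlow εhigh δ ≤ 0 := by
    intro δ
    by_cases hδ : δ = 0
    · rw [hδ, h0]
    · exact (hneg δ hδ).le
  refine ⟨h0, hneg, fun A δ => ?_, fun A δ hA => ?_⟩
  · have := mul_nonpos_of_nonneg_of_nonpos (abs_nonneg A) (hnonpos δ)
    linarith
  · constructor
    · intro h
      by_contra hδ
      have h1 := hneg δ hδ
      have h2 : 0 < |A| := abs_pos.mpr hA
      nlinarith
    · intro h; rw [h, h0]; ring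
end

section
/- Token-level local directional regularization identity: let E be a real normed vector space, let A and c be real numbers, and let f : E → ℝ be differentiable at a point θ ∈ E. Define δ(θ) = sgn(A)·(f(θ) − c), where sgn is the real sign function with sgn(0) = 0. Then the map θ ↦ A·f(θ) + |A|·ψ(sgn(A)·(f(θ) − c)) is differentiable at θ, and its Fréchet derivative there equals w(δ(θ)) · A · Df(θ), where Df(θ) is the Fréchet derivative of f at θ. In other words, adding the directional regularizer |A|·ψ(δ(·)) rescales the raw policy-gradient contribution A·Df(θ) by exactly the factor w(δ(θ)). -/
/-! Since `|A| · sgn A = A`, the chain rule turns the regularizer `|A| · ψ(sgn A · (f − c))`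
into the extra term `ψ'(δ) · A · Df`; by the fundamental theorem of calculus `ψ' = w − 1`,
so the total derivative is `w(δ) · A · Df`. -/

theorem Real.abs_mul_sign (r : ℝ) : |r| * Real.sign r = r := by
  rcases lt_trichotomy r 0 with hr | rfl | hr
  · simp [Real.sign_of_neg hr, abs_of_neg hr]
  · simp
  · simp [Real.sign_of_pos hr, abs_of_pos hr]

theorem HasFDerivAt.const_mul_add_abs_mul_comp_sign_mul_sub
    {E : Type*} [NormedAddCommGroup E] [NormedSpace ℝ E]
    {f : E → ℝ} {Df : E →L[ℝ] ℝ} {θ : E} {ψ : ℝ → ℝ} {ψ' : ℝ} (A c : ℝ)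
    (hf : HasFDerivAt f Df θ) (hψ : HasDerivAt ψ ψ' (Real.sign A * (f θ - c))) :
    HasFDerivAt (fun θ' => A * f θ' + |A| * ψ (Real.sign A * (f θ' - c)))
      (((1 + ψ') * A) • Df) θ := by
  have hδ : HasFDerivAt (fun θ' => Real.sign A * (f θ' - c)) (Real.sign A • Df) θ := by
    simpa using (hf.sub_const c).const_mul (Real.sign A)
  have hsum := (hf.const_mul A).add ((hψ.comp_hasFDerivAt θ hδ).const_mul |A|)
  refine hsum.congr_fderiv ?_
  rw [smul_smul, smul_smul, ← add_smul]
  congr 1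
  linear_combination ψ' * Real.abs_mul_sign A

theorem continuous_owpoWeight (εlow εhigh : ℝ) : Continuous (owpoWeight εlow εhigh) := by
  unfold owpoWeight
  fun_prop

theorem hasDerivAt_owpoPotential (εlow εhigh δ : ℝ) :
    HasDerivAt (owpoPotential εlow εhigh) (owpoWeight εlow εhigh δ - 1) δ :=
  (((continuous_owpoWeight εlow εhigh).sub continuous_const).integral_hasStrictDerivAt
    0 δ).hasDerivAt

theorem owpo_local_directional_regularization_general (εlow εhigh : ℝ)
    {E : Type*} [NormedAddCommGroup E] [NormedSpace ℝ E]
    (A c : ℝ) (f : E → ℝ) (θ : E) (Df : E →L[ℝ] ℝ)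
    (hf : HasFDerivAt f Df θ) :
    HasFDerivAt
      (fun θ' : E => A * f θ' +
        |A| * owpoPotential εlow εhigh (Real.sign A * (f θ' - c)))
      ((owpoWeight εlow εhigh (Real.sign A * (f θ - c)) * A) • Df) θ := by
  simpa using hf.const_mul_add_abs_mul_comp_sign_mul_sub A c (hasDerivAt_owpoPotential _ _ _)

/-- Token-level local directional regularization identity: adding the directional regularizer
`|A|·ψ(sgn(A)·(f(θ) − c))` to the raw term `A·f(θ)` yields a map whose Fréchet derivative at `θ`
is `w(δ(θ)) · A · Df(θ)`, where `δ(θ) = sgn(A)·(f(θ) − c)`. -/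
theorem owpo_local_directional_regularization (εlow εhigh : ℝ)
    (hlow : 0 < εlow) (hlow1 : εlow < 1) (hhigh : 1 < εhigh)
    {E : Type*} [NormedAddCommGroup E] [NormedSpace ℝ E]
    (A c : ℝ) (f : E → ℝ) (θ : E) (Df : E →L[ℝ] ℝ)
    (hf : HasFDerivAt f Df θ) :
    HasFDerivAt
      (fun θ' : E => A * f θ' +
        |A| * owpoPotential εlow εhigh (Real.sign A * (f θ' - c)))
      ((owpoWeight εlow εhigh (Real.sign A * (f θ - c)) * A) • Df) θ :=
  owpo_local_directional_regularization_general εlow εhigh A c f θ Df hf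
end

section
/- Local directional regularization (trajectory form, Lemma 1 with fixed trajectory): let E be a real normed vector space, let T be a natural number, and for each t ∈ {1, …, T} let A_t, c_t be real numbers and f_t : E → ℝ be differentiable at a point θ ∈ E. Define δ_t(θ) = sgn(A_t)·(f_t(θ) − c_t), the surrogate J_PG(θ) = Σ_{t=1}^T A_t·f_t(θ), and the regularizer Ω(θ) = Σ_{t=1}^T |A_t|·ψ(δ_t(θ)). Then J_PG + Ω is differentiable at θ and its Fréchet derivative there equals Σ_{t=1}^T w(δ_t(θ)) · A_t · Df_t(θ). Hence the OWPO update direction at θ coincides with the gradient of the directionally regularized policy-gradient objective J_PG + Ω. -/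
theorem hasDerivAt_mul_add_abs_mul_owpoPotential (εlow εhigh a c x : ℝ) :
    HasDerivAt (fun y => a * y + |a| * owpoPotential εlow εhigh (Real.sign a * (y - c)))
      (owpoWeight εlow εhigh (Real.sign a * (x - c)) * a) x := by
  have hδ : HasDerivAt (fun y => Real.sign a * (y - c)) (Real.sign a) x := by
    simpa using ((hasDerivAt_id x).sub_const c).const_mul (Real.sign a)
  have hψ := (hasDerivAt_owpoPotential εlow εhigh _).comp x hδ
  refine (((hasDerivAt_id x).const_mul a).add (hψ.const_mul |a|)).congr_deriv ?_
  linear_combination (owpoWeight εlow εhigh (Real.sign a * (x - c)) - 1) * Real.abs_mul_sign a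

theorem owpo_local_directional_regularization_trajectory_general (εlow εhigh : ℝ)
    {E : Type*} [NormedAddCommGroup E] [NormedSpace ℝ E]
    (T : ℕ) (A c : Fin T → ℝ) (f : Fin T → E → ℝ) (θ : E)
    (Df : Fin T → (E →L[ℝ] ℝ)) (hf : ∀ t : Fin T, HasFDerivAt (f t) (Df t) θ) :
    HasFDerivAt
      (fun θ' : E =>
        (∑ t : Fin T, A t * f t θ') +
        ∑ t : Fin T, |A t| * owpoPotential εlow εhigh (Real.sign (A t) * (f t θ' - c t)))
      (∑ t : Fin T,
        (owpoWeight εlow εhigh (Real.sign (A t) * (f t θ - c t)) * A t) • Df t) θ := by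
  have hterm (t : Fin T) := (hasDerivAt_mul_add_abs_mul_owpoPotential εlow εhigh (A t) (c t)
    (f t θ)).comp_hasFDerivAt θ (hf t)
  refine (HasFDerivAt.fun_sum fun t _ => hterm t).congr_of_eventuallyEq
    (Filter.Eventually.of_forall fun θ' => ?_)
  exact Finset.sum_add_distrib.symm

/-- Local directional regularization (trajectory form): the sum of the policy-gradient surrogate
`J_PG(θ) = Σ_t A_t·f_t(θ)` and the directional regularizer
`Ω(θ) = Σ_t |A_t|·ψ(sgn(A_t)·(f_t(θ) − c_t))` is differentiable at `θ`, with Fréchet derivative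
`Σ_t w(δ_t(θ)) · A_t · Df_t(θ)`, where `δ_t(θ) = sgn(A_t)·(f_t(θ) − c_t)`. -/
theorem owpo_local_directional_regularization_trajectory (εlow εhigh : ℝ)
    (hlow : 0 < εlow) (hlow1 : εlow < 1) (hhigh : 1 < εhigh)
    {E : Type*} [NormedAddCommGroup E] [NormedSpace ℝ E]
    (T : ℕ) (A c : Fin T → ℝ) (f : Fin T → E → ℝ) (θ : E)
    (Df : Fin T → (E →L[ℝ] ℝ)) (hf : ∀ t : Fin T, HasFDerivAt (f t) (Df t) θ) :
    HasFDerivAt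
      (fun θ' : E =>
        (∑ t : Fin T, A t * f t θ') +
        ∑ t : Fin T, |A t| * owpoPotential εlow εhigh (Real.sign (A t) * (f t θ' - c t)))
      (∑ t : Fin T,
        (owpoWeight εlow εhigh (Real.sign (A t) * (f t θ - c t)) * A t) • Df t) θ :=
  owpo_local_directional_regularization_trajectory_general εlow εhigh T A c f θ Df hf
end
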